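/- Consider u two-factor secure sketch systems enrolled from the same biometric: A₀ is uniform on (ZMod 2)^n; for each i ∈ {1,…,u}, Aᵢ = A₀ ⊕ Nᵢ where N₁,…,N_u are random noise vectors in (ZMod 2)^n, K₁,…,K_u are keys with Kᵢ uniform on (ZMod 2)^{mᵢ}, the collection (A₀, N₁,…,N_u, K₁,…,K_u) is mutually independent, Hᵢ is an mᵢ × n binary matrix of full row rank, and Sᵢ := HᵢAᵢ ⊕ Kᵢ. For any choice function c : {1,…,u} → {stored, key}, define Vᵢ := Sᵢ if c(i) = stored and Vᵢ := Kᵢ if c(i) = key. Then the tuple (V₁,…,V_u) consists of mutually independent uniform vectors and is independent of A₀. In other words, if no single system has both its stored data and its key compromised (l = 0), the compromised data leaks no information about the biometric: I(A₀; V) = 0. -/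

import Mathlib

open Classical in
/-- Probability of the event `P` under the probability mass function `μ` on the finite
sample space `Ω`. -/
noncomputable def prMass {Ω : Type*} [Fintype Ω] (μ : Ω → ℝ) (P : Ω → Prop) : ℝ :=
  ∑ ω : Ω, if P ω then μ ω else 0

/-- Mutual information (in bits) between the discrete random variables `X` and `Y` on the
finite probability space `(Ω, μ)`. -/
noncomputable def mutualInfoM {Ω α β : Type*} [Fintype Ω] [Fintype α] [Fintype β]
    (μ : Ω → ℝ) (X : Ω → α) (Y : Ω → β) : ℝ :=
  ∑ x : α, ∑ y : β,
    prMass μ (fun ω => X ω = x ∧ Y ω = y) *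
      Real.logb 2 (prMass μ (fun ω => X ω = x ∧ Y ω = y) /
        (prMass μ (fun ω => X ω = x) * prMass μ (fun ω => Y ω = y)))


/-!
Each compromised component is either a key `Kᵢ` or `Hᵢ(A₀ ⊕ Nᵢ) ⊕ Kᵢ`, so once the biometric
and the noise are fixed, the tuple `V` is a translate of the key tuple `K`. Since `K` is uniform
and independent of `(A₀, N)`, this is a one-time pad: conditionally on every value of `(A₀, N)`,
`V` is uniform. Hence `Pr[A₀ = a, V = v] = Pr[A₀ = a] ⋅ 2^{-∑ mᵢ}`, and everything else follows
by summing out `a` or `v`.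
-/

open Classical

section FiniteProbability

variable {Ω : Type*} [Fintype Ω] (μ : Ω → ℝ)

theorem prMass_eq_sum_prMass_and {α : Type*} [Fintype α] (X : Ω → α) (P : Ω → Prop) :
    prMass μ P = ∑ x, prMass μ (fun ω => X ω = x ∧ P ω) := by
  simp only [prMass]
  rw [Finset.sum_comm]
  refine Finset.sum_congr rfl fun ω _ => ?_
  by_cases hP : P ω <;> simp [hP]

theorem prMass_eq_sum_ite {β : Type*} [Fintype β] (V : Ω → β) (Q : β → Prop) :
    prMass μ (fun ω => Q (V ω)) = ∑ v, if Q v then prMass μ (fun ω => V ω = v) else 0 := by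
  rw [prMass_eq_sum_prMass_and μ V]
  refine Finset.sum_congr rfl fun v _ => ?_
  split_ifs with hv
  · exact congrArg (prMass μ) (funext fun ω => propext (and_iff_left_of_imp fun h => h ▸ hv))
  · exact Finset.sum_eq_zero fun ω _ => if_neg fun ⟨hVv, hQ⟩ => hv (hVv ▸ hQ)

theorem mutualInfoM_eq_zero_of_indep {α β : Type*} [Fintype α] [Fintype β]
    {X : Ω → α} {Y : Ω → β}
    (h : ∀ x y, prMass μ (fun ω => X ω = x ∧ Y ω = y)
      = prMass μ (fun ω => X ω = x) * prMass μ (fun ω => Y ω = y)) :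
    mutualInfoM μ X Y = 0 := by
  unfold mutualInfoM
  refine Finset.sum_eq_zero fun x _ => Finset.sum_eq_zero fun y _ => ?_
  rw [h]
  by_cases h0 : prMass μ (fun ω => X ω = x) * prMass μ (fun ω => Y ω = y) = 0
  · rw [h0, zero_mul]
  · rw [div_self h0, Real.logb_one, mul_zero]

theorem prMass_apply_eq_of_prMass_eq_prod {ι : Type*} [Fintype ι] {β : ι → Type*}
    [∀ i, Fintype (β i)] (V : Ω → ∀ i, β i) (w : ι → ℝ)
    (hV : ∀ v, prMass μ (fun ω => V ω = v) = ∏ j, w j)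
    (hw : ∀ j, (Fintype.card (β j) : ℝ) * w j = 1) (i : ι) (x : β i) :
    prMass μ (fun ω => V ω i = x) = w i := by
  rw [prMass_eq_sum_ite μ V (fun v => v i = x)]
  simp only [hV]
  rw [← Finset.sum_filter, Finset.sum_const, ← Fintype.piFinset_univ,
    Fintype.card_filter_piFinset_eq_of_mem (fun _ => Finset.univ) i (Finset.mem_univ x),
    nsmul_eq_mul, ← Finset.mul_prod_erase _ _ (Finset.mem_univ i)]
  push_cast
  rw [mul_left_comm, ← Finset.prod_mul_distrib]
  simp [hw]

end FiniteProbability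

def addLeftWhere {ι : Type*} {G : ι → Type*} [∀ i, AddGroup (G i)] (c : ι → Bool)
    (x : ∀ i, G i) : (∀ i, G i) ≃ ∀ i, G i where
  toFun k i := if c i then x i + k i else k i
  invFun k i := if c i then -x i + k i else k i
  left_inv k := by funext i; by_cases h : c i <;> simp [h]
  right_inv k := by funext i; by_cases h : c i <;> simp [h]

theorem Equiv.sum_ite_apply_eq {γ M : Type*} [Fintype γ] [AddCommMonoid M] (e : γ ≃ γ)
    (v : γ) (r : M) : (∑ k, if e k = v then r else 0) = r :=
  (e.sum_comp fun k => if k = v then r else 0).trans (by simp)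

theorem prMass_fst_eq_and_eq {α β γ : Type*} [Fintype α] [Fintype β] [Fintype γ]
    (p : α → ℝ) (q : β → ℝ) (r : ℝ) (e : α → β → γ ≃ γ) (a : α) (v : γ) :
    prMass (fun ω : α × β × γ => p ω.1 * q ω.2.1 * r)
        (fun ω => ω.1 = a ∧ e ω.1 ω.2.1 ω.2.2 = v) = p a * (∑ b, q b) * r := by
  simp only [prMass, Fintype.sum_prod_type, ite_and]
  simp [Equiv.sum_ite_apply_eq, Finset.mul_sum, Finset.sum_mul]

theorem card_pi_mul_prod_eq_one {ι : Type*} [Fintype ι] [DecidableEq ι] {β : ι → Type*}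
    [∀ i, Fintype (β i)] (w : ι → ℝ) (hw : ∀ i, (Fintype.card (β i) : ℝ) * w i = 1) :
    (Fintype.card (∀ i, β i) : ℝ) * ∏ i, w i = 1 := by
  rw [Fintype.card_pi]
  push_cast
  rw [← Finset.prod_mul_distrib]
  exact Finset.prod_eq_one fun i _ => hw i

theorem card_binaryVec_mul_one_div (k : ℕ) :
    (Fintype.card (Fin k → ZMod 2) : ℝ) * (1 / 2 ^ k) = 1 := by
  simp [ZMod.card]

theorem stmt_14_general (n u : ℕ) (m : Fin u → ℕ)
    (H : ∀ i, Matrix (Fin (m i)) (Fin n) (ZMod 2))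
    (ν : Fin u → (Fin n → ZMod 2) → ℝ)
    (hν1 : ∀ i, ∑ x, ν i x = 1)
    (c : Fin u → Bool) :
    let Ω : Type := (Fin n → ZMod 2) × (∀ _ : Fin u, Fin n → ZMod 2)
      × (∀ i : Fin u, Fin (m i) → ZMod 2)
    let μ : Ω → ℝ := fun ω =>
      (1 / 2 ^ n) * (∏ i, ν i (ω.2.1 i)) * ∏ i, ((1 : ℝ) / 2 ^ (m i))
    let V : Ω → ∀ i : Fin u, Fin (m i) → ZMod 2 := fun ω i =>
      if c i then (H i).mulVec (ω.1 + ω.2.1 i) + ω.2.2 i else ω.2.2 i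
    (∀ (i : Fin u) (vi : Fin (m i) → ZMod 2),
        prMass μ (fun ω => V ω i = vi) = 1 / 2 ^ (m i))
    ∧ (∀ v : ∀ i : Fin u, Fin (m i) → ZMod 2,
        prMass μ (fun ω => V ω = v) = ∏ i, ((1 : ℝ) / 2 ^ (m i)))
    ∧ (∀ (a : Fin n → ZMod 2) (v : ∀ i : Fin u, Fin (m i) → ZMod 2),
        prMass μ (fun ω => ω.1 = a ∧ V ω = v)
          = prMass μ (fun ω => ω.1 = a) * prMass μ (fun ω => V ω = v))
    ∧ mutualInfoM μ (fun ω => ω.1) V = 0 := by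
  intro Ω μ V
  set C : ℝ := ∏ i, (1 : ℝ) / 2 ^ (m i)
  have hnoise : ∑ b : Fin u → Fin n → ZMod 2, ∏ i, ν i (b i) = 1 := by
    simp [← Fintype.prod_sum, hν1]
  have hjoint : ∀ a v, prMass μ (fun ω => ω.1 = a ∧ V ω = v) = 1 / 2 ^ n * C := fun a v => by
    have h := prMass_fst_eq_and_eq (fun _ => (1 : ℝ) / 2 ^ n)
      (fun b : Fin u → Fin n → ZMod 2 => ∏ i, ν i (b i)) C
      (fun (a : Fin n → ZMod 2) (b : Fin u → Fin n → ZMod 2) =>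
        addLeftWhere c fun i => (H i).mulVec (a + b i)) a v
    rwa [hnoise, mul_one] at h
  have hkeys : (Fintype.card (∀ i, Fin (m i) → ZMod 2) : ℝ) * C = 1 :=
    card_pi_mul_prod_eq_one (fun i => (1 : ℝ) / 2 ^ (m i)) fun i =>
      card_binaryVec_mul_one_div (m i)
  have hA : ∀ a, prMass μ (fun ω => ω.1 = a) = 1 / 2 ^ n := fun a => by
    rw [prMass_eq_sum_prMass_and μ V]
    simp only [and_comm (a := V _ = _), hjoint]
    rw [Finset.sum_const, Finset.card_univ, nsmul_eq_mul, mul_left_comm, hkeys, mul_one]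
  have hV : ∀ v, prMass μ (fun ω => V ω = v) = C := fun v => by
    rw [prMass_eq_sum_prMass_and μ Prod.fst]
    simp only [hjoint]
    rw [Finset.sum_const, Finset.card_univ, nsmul_eq_mul, ← mul_assoc,
      card_binaryVec_mul_one_div, one_mul]
  have hindep : ∀ a v, prMass μ (fun ω => ω.1 = a ∧ V ω = v)
      = prMass μ (fun ω => ω.1 = a) * prMass μ (fun ω => V ω = v) := fun a v => by
    rw [hjoint, hA, hV]
  exact ⟨prMass_apply_eq_of_prMass_eq_prod μ V _ hV fun j => card_binaryVec_mul_one_div (m j),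
    hV, hindep, mutualInfoM_eq_zero_of_indep μ hindep⟩

/-- `u` two-factor secure-sketch systems are enrolled from the same
biometric: the sample space consists of `ω = (a, nn, kk)` where `a` is the underlying
biometric `A₀` (uniform on `(ZMod 2)^n`), `nn i` is the measurement noise of system `i`
(arbitrary distributions `ν i`), and `kk i` is the key of system `i` (uniform on
`(ZMod 2)^{m i}`), all mutually independent; system `i` enrolls `Aᵢ = A₀ ⊕ Nᵢ` and stores
`Sᵢ = Hᵢ Aᵢ ⊕ Kᵢ` with `Hᵢ` of full row rank.  For any choice `c` selecting, for each
system, either its stored data (`c i = true`) or its key (`c i = false`), the resulting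
tuple `V` is a collection of mutually independent uniform vectors
(`Pr[V = v] = Π_i 2^{-m i}` with uniform marginals) that is jointly independent of `A₀`;
in particular the privacy leakage is `I(A₀; V) = 0`. -/
theorem stmt_14 (n u : ℕ) (m : Fin u → ℕ)
    (H : ∀ i, Matrix (Fin (m i)) (Fin n) (ZMod 2))
    (hH : ∀ i, LinearIndependent (ZMod 2) (fun r => H i r))
    (ν : Fin u → (Fin n → ZMod 2) → ℝ)
    (hν0 : ∀ i x, 0 ≤ ν i x) (hν1 : ∀ i, ∑ x, ν i x = 1)
    (c : Fin u → Bool) :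
    let Ω : Type := (Fin n → ZMod 2) × (∀ _ : Fin u, Fin n → ZMod 2)
      × (∀ i : Fin u, Fin (m i) → ZMod 2)
    let μ : Ω → ℝ := fun ω =>
      (1 / 2 ^ n) * (∏ i, ν i (ω.2.1 i)) * ∏ i, ((1 : ℝ) / 2 ^ (m i))
    let V : Ω → ∀ i : Fin u, Fin (m i) → ZMod 2 := fun ω i =>
      if c i then (H i).mulVec (ω.1 + ω.2.1 i) + ω.2.2 i else ω.2.2 i
    (∀ (i : Fin u) (vi : Fin (m i) → ZMod 2),
        prMass μ (fun ω => V ω i = vi) = 1 / 2 ^ (m i))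
    ∧ (∀ v : ∀ i : Fin u, Fin (m i) → ZMod 2,
        prMass μ (fun ω => V ω = v) = ∏ i, ((1 : ℝ) / 2 ^ (m i)))
    ∧ (∀ (a : Fin n → ZMod 2) (v : ∀ i : Fin u, Fin (m i) → ZMod 2),
        prMass μ (fun ω => ω.1 = a ∧ V ω = v)
          = prMass μ (fun ω => ω.1 = a) * prMass μ (fun ω => V ω = v))
    ∧ mutualInfoM μ (fun ω => ω.1) V = 0 :=
  stmt_14_general n u m H ν hν1 c
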